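/- For every integer d ≥ 1, every centrally symmetric triangulation of a convex polygon with 2d+2 vertices contains exactly one diagonal, i.e. exactly one edge of the form {x, x̄}. -/

import Mathlib

namespace Cyclo

/-! Centrally symmetric triangulations of a convex polygon with `n` vertices,
labelled clockwise by `ZMod n`. -/

/-- The vertex opposite to `x` of the polygon with `n` vertices. -/
def opp (n : ℕ) (x : ZMod n) : ZMod n := x + ((n / 2 : ℕ) : ZMod n)

/-- `e` is an edge on the polygon: a set of two distinct vertices. -/
def IsEdge (n : ℕ) (e : Finset (ZMod n)) : Prop :=
  ∃ x y : ZMod n, x ≠ y ∧ e = {x, y}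

/-- `e` is a boundary edge of the polygon. -/
def IsBoundaryEdge (n : ℕ) (e : Finset (ZMod n)) : Prop :=
  ∃ x : ZMod n, e = {x, x + 1}

/-- `y` lies strictly between `x` and `z` in the clockwise cyclic order. -/
def Sbtw (n : ℕ) (x y z : ZMod n) : Prop :=
  0 < (y - x).val ∧ (y - x).val < (z - x).val

/-- Two edges cross: exactly one endpoint of one lies strictly between the
endpoints of the other in the clockwise cyclic order. -/
def Crosses (n : ℕ) (e f : Finset (ZMod n)) : Prop :=
  ∃ a b c d : ZMod n, e = {a, b} ∧ f = {c, d} ∧ Sbtw n a c b ∧ Sbtw n b d a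

/-- A triangulation: a maximal set of pairwise non-crossing edges. -/
def IsTriangulation (n : ℕ) (T : Set (Finset (ZMod n))) : Prop :=
  (∀ e ∈ T, IsEdge n e) ∧
  (∀ e ∈ T, ∀ f ∈ T, ¬ Crosses n e f) ∧
  (∀ e, IsEdge n e → (∀ f ∈ T, ¬ Crosses n e f ∧ ¬ Crosses n f e) → e ∈ T)

/-- `T` is centrally symmetric. -/
def IsCS (n : ℕ) (T : Set (Finset (ZMod n))) : Prop :=
  ∀ x y : ZMod n, ({x, y} : Finset (ZMod n)) ∈ T →
    ({opp n x, opp n y} : Finset (ZMod n)) ∈ T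

/-- `T` is a centrally symmetric triangulation. -/
def IsCST (n : ℕ) (T : Set (Finset (ZMod n))) : Prop :=
  IsTriangulation n T ∧ IsCS n T

/-- `T'` is obtained from `T` by flipping the interior edge `{x,x'}` (and its
centrally symmetric copy `{x̄,x̄'}`): the four boundary edges of the quadrilateral
with diagonal `{x,x'}` belong to `T`, and `{x,x'}`, `{x̄,x̄'}` are replaced by the
opposite diagonals `{y,y'}`, `{ȳ,ȳ'}`. -/
def IsFlip (n : ℕ) (T T' : Set (Finset (ZMod n))) : Prop :=
  IsCST n T ∧ IsCST n T' ∧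
  ∃ x x' y y' : ZMod n,
    ¬ IsBoundaryEdge n {x, x'} ∧
    ({x, x'} : Finset (ZMod n)) ∈ T ∧ ({x, y} : Finset (ZMod n)) ∈ T ∧
    ({y, x'} : Finset (ZMod n)) ∈ T ∧ ({x', y'} : Finset (ZMod n)) ∈ T ∧
    ({y', x} : Finset (ZMod n)) ∈ T ∧
    T' = (T \ {({x, x'} : Finset (ZMod n)), {opp n x, opp n x'}}) ∪
         {({y, y'} : Finset (ZMod n)), {opp n y, opp n y'}}

/-- The flip graph (on all sets of edges; non-triangulations are isolated vertices). -/
def flipGraph (n : ℕ) : SimpleGraph (Set (Finset (ZMod n))) :=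
  SimpleGraph.fromRel (IsFlip n)

/-- The flip distance of two centrally symmetric triangulations. -/
noncomputable def delta (n : ℕ) (T T' : Set (Finset (ZMod n))) : ℕ := (flipGraph n).dist T T'

/-- The flip graph on the centrally symmetric triangulations of the `n`-gon;
it is isomorphic to the graph of the `(n/2 - 1)`-dimensional cyclohedron. -/
def flipGraphCS (n : ℕ) : SimpleGraph {T : Set (Finset (ZMod n)) // IsCST n T} :=
  SimpleGraph.fromRel fun T T' => IsFlip n T.1 T'.1

/-- `g 0, …, g k` is a geodesic from `Tm` to `Tp`. -/
def IsGeodesic (n : ℕ) (Tm Tp : Set (Finset (ZMod n)))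
    (g : ℕ → Set (Finset (ZMod n))) (k : ℕ) : Prop :=
  g 0 = Tm ∧ g k = Tp ∧ (∀ i < k, (flipGraph n).Adj (g i) (g (i + 1))) ∧
    k = delta n Tm Tp

/-- The flip transforming `T` into `T'` is incident to the boundary edge `{p,q}`:
it removes `{p,r}` or `{q,r}`, where `r` is the apex of the triangle of `T` on `{p,q}`. -/
def FlipIncident (n : ℕ) (T T' : Set (Finset (ZMod n))) (p q : ZMod n) : Prop :=
  ∃ r : ZMod n, ({p, r} : Finset (ZMod n)) ∈ T ∧ ({q, r} : Finset (ZMod n)) ∈ T ∧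
    (({p, r} : Finset (ZMod n)) ∉ T' ∨ ({q, r} : Finset (ZMod n)) ∉ T')

/-- The number of flips along the path `g 0, …, g k` incident to `{p,q}`. -/
noncomputable def incidentCount (n : ℕ) (g : ℕ → Set (Finset (ZMod n))) (k : ℕ) (p q : ZMod n) : ℕ :=
  Nat.card {i : Fin k // FlipIncident n (g i.1) (g (i.1 + 1)) p q}

/-- `x`, `y`, `z` are the vertices of a triangle of `T`. -/
def IsTriangleOf (n : ℕ) (T : Set (Finset (ZMod n))) (x y z : ZMod n) : Prop :=
  ({x, y} : Finset (ZMod n)) ∈ T ∧ ({y, z} : Finset (ZMod n)) ∈ T ∧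
    ({x, z} : Finset (ZMod n)) ∈ T

/-- The three edges of the triangle with vertices `x`, `y`, `z`. -/
def triEdges (n : ℕ) (x y z : ZMod n) : Set (Finset (ZMod n)) :=
  {{x, y}, {y, z}, {x, z}}

/-- Relabelling map for the deletion of vertex `p` from the polygon with `2e+2`
vertices: `p` is replaced by `q = p+1`, `p̄` by `q̄`, and the remaining `2e`
vertices are relabelled clockwise by `ZMod (2e)` (with `q ↦ 0`), so that
opposite vertices again differ by `e`. -/
def delV (e : ℕ) (p x : ZMod (2 * e + 2)) : ZMod (2 * e) :=
  ((if (x - p).val ≤ e + 1 then (x - p).val - 1 else (x - p).val - 2 : ℕ) : ZMod (2 * e))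

/-- Deletion of vertex `p` from `T`: remove the edges `{p,p+1}` and `{p̄,p̄+1}`,
replace `p` by `p+1` and `p̄` by `p̄+1` in every other edge, and relabel. -/
def delT (e : ℕ) (p : ZMod (2 * e + 2)) (T : Set (Finset (ZMod (2 * e + 2)))) :
    Set (Finset (ZMod (2 * e))) :=
  (fun s => s.image (delV e p)) ''
    (T \ {({p, p + 1} : Finset (ZMod (2 * e + 2))),
          {opp (2 * e + 2) p, opp (2 * e + 2) p + 1}})

/-- `DelButOne h k Tm Tp p₀ Sm Sp` holds when the pair `(Sm, Sp)` is obtained from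
the pair `(Tm, Tp)` by successively deleting `k` of the `k+1` consecutive vertices
`p₀, p₀+1, …, p₀+k` (all but one of them), the deletions being performed in the
successively smaller polygons with the surviving vertices keeping their cyclic order. -/
def DelButOne : (h k : ℕ) → Set (Finset (ZMod (2 * (h + k) + 2))) →
    Set (Finset (ZMod (2 * (h + k) + 2))) → ZMod (2 * (h + k) + 2) →
    Set (Finset (ZMod (2 * h + 2))) → Set (Finset (ZMod (2 * h + 2))) → Prop
  | _, 0, Tm, Tp, _, Sm, Sp => Sm = Tm ∧ Sp = Tp
  | h, k + 1, Tm, Tp, p₀, Sm, Sp =>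
      ∃ j : ℕ, j ≤ k + 1 ∧
        DelButOne h k (delT (h + k + 1) (p₀ + (j : ZMod (2 * (h + (k + 1)) + 2))) Tm)
          (delT (h + k + 1) (p₀ + (j : ZMod (2 * (h + (k + 1)) + 2))) Tp)
          (delV (h + k + 1) (p₀ + (j : ZMod (2 * (h + (k + 1)) + 2))) p₀) Sm Sp

/-- The set of boundary edges of the polygon with `n` vertices. -/
def boundarySet (n : ℕ) : Set (Finset (ZMod n)) := {e | IsBoundaryEdge n e}

/-- Closure of a set of edges under the central symmetry. -/
def symCl (n : ℕ) (S : Set (Finset (ZMod n))) : Set (Finset (ZMod n)) :=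
  S ∪ (fun e => e.image (opp n)) '' S


/-- The interior edges (up to central symmetry) of the triangulation `A⁻`. -/
def AminusInterior (b c d : ℕ) : Set (Finset (ZMod (2 * d + 2))) :=
  {({(0 : ZMod (2 * d + 2)), opp (2 * d + 2) 0} : Finset (ZMod (2 * d + 2)))} ∪
  {e | ∃ x : ℕ, c ≤ x ∧ x ≤ d ∧
    e = ({(0 : ZMod (2 * d + 2)), (x : ZMod (2 * d + 2))} : Finset (ZMod (2 * d + 2)))} ∪
  {e | ∃ x : ℕ, b ≤ x ∧ x ≤ c ∧
    e = ({(1 : ZMod (2 * d + 2)), (x : ZMod (2 * d + 2))} : Finset (ZMod (2 * d + 2)))} ∪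
  {e | ∃ i : ℕ, 2 ≤ i ∧ i ≤ (b - 1) / 2 ∧
    e = ({(i : ZMod (2 * d + 2)), ((b + 1 - i : ℕ) : ZMod (2 * d + 2))} : Finset (ZMod (2 * d + 2)))} ∪
  {e | ∃ i : ℕ, 2 ≤ i ∧ i ≤ b / 2 ∧
    e = ({(i : ZMod (2 * d + 2)), ((b + 2 - i : ℕ) : ZMod (2 * d + 2))} : Finset (ZMod (2 * d + 2)))}

/-- The triangulation `A⁻` of the `(2d+2)`-gon: its edges are the boundary edges,
the interior edges listed in `AminusInterior`, and their centrally symmetric copies. -/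
def AminusSet (b c d : ℕ) : Set (Finset (ZMod (2 * d + 2))) :=
  boundarySet (2 * d + 2) ∪ symCl (2 * d + 2) (AminusInterior b c d)

/-- The edges that any triangulation `A⁺` of an `(a,b,c,d)`-pair must contain
(`l = a + b - d + 2`): the edges `{1,d̄}` and `{l,c̄}`, the centrally symmetric
zigzag crossing `{0,0̄}`, and the centrally symmetric copies of all of these. -/
def AplusCore (a b c d : ℕ) : Set (Finset (ZMod (2 * d + 2))) :=
  symCl (2 * d + 2)
    ({({(1 : ZMod (2 * d + 2)), opp (2 * d + 2) (d : ZMod (2 * d + 2))} : Finset (ZMod (2 * d + 2)))} ∪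
     {({((a + b - d + 2 : ℕ) : ZMod (2 * d + 2)),
        opp (2 * d + 2) (c : ZMod (2 * d + 2))} : Finset (ZMod (2 * d + 2)))} ∪
     {e | ∃ i : ℕ, a + b - d + 2 ≤ i ∧ i ≤ c ∧
       e = ({(i : ZMod (2 * d + 2)),
             opp (2 * d + 2) ((c + (a + b - d + 2) - i : ℕ) : ZMod (2 * d + 2))} : Finset (ZMod (2 * d + 2)))} ∪
     {e | ∃ i : ℕ, a + b - d + 2 ≤ i ∧ i ≤ c - 1 ∧
       e = ({(i : ZMod (2 * d + 2)),
             opp (2 * d + 2) ((c + (a + b - d + 2) - 1 - i : ℕ) : ZMod (2 * d + 2))} : Finset (ZMod (2 * d + 2)))})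

/-- `T` is an admissible triangulation `A⁺` for an `(a,b,c,d)`-pair: a centrally
symmetric triangulation containing `AplusCore`, all of whose remaining interior
edges join a vertex of `{1,…,l}` to a vertex of `{c̄,…,d̄}` or a vertex of
`{1̄,…,l̄}` to a vertex of `{c,…,d}`, and in which every vertex of `{c̄,…,d̄}` is
joined to at least two vertices of `{1,…,l}` (so combs with at least two teeth
are attached at the vertices `c̄,…,d̄` and their opposites). -/
def IsAplus (a b c d : ℕ) (T : Set (Finset (ZMod (2 * d + 2)))) : Prop :=
  IsCST (2 * d + 2) T ∧ AplusCore a b c d ⊆ T ∧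
  (∀ e ∈ T, ¬ IsBoundaryEdge (2 * d + 2) e → e ∉ AplusCore a b c d →
    ∃ i j : ℕ, 1 ≤ i ∧ i ≤ a + b - d + 2 ∧ c ≤ j ∧ j ≤ d ∧
      (e = ({(i : ZMod (2 * d + 2)), opp (2 * d + 2) (j : ZMod (2 * d + 2))} : Finset (ZMod (2 * d + 2))) ∨
       e = ({opp (2 * d + 2) (i : ZMod (2 * d + 2)), (j : ZMod (2 * d + 2))} : Finset (ZMod (2 * d + 2))))) ∧
  (∀ j : ℕ, c ≤ j → j ≤ d →
    ∃ i₁ i₂ : ℕ, 1 ≤ i₁ ∧ i₁ ≤ a + b - d + 2 ∧ 1 ≤ i₂ ∧ i₂ ≤ a + b - d + 2 ∧ i₁ ≠ i₂ ∧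
      ({(i₁ : ZMod (2 * d + 2)), opp (2 * d + 2) (j : ZMod (2 * d + 2))} : Finset (ZMod (2 * d + 2))) ∈ T ∧
      ({(i₂ : ZMod (2 * d + 2)), opp (2 * d + 2) (j : ZMod (2 * d + 2))} : Finset (ZMod (2 * d + 2))) ∈ T)

/-- `(Am, Ap)` is an `(a,b,c,d)`-pair. -/
def IsABCDPair (a b c d : ℕ) (Am Ap : Set (Finset (ZMod (2 * d + 2)))) : Prop :=
  b < c ∧ c ≤ d ∧ d ≤ a + b ∧ 2 * a + b + 2 < 2 * d ∧
  Am = AminusSet b c d ∧ IsAplus a b c d Ap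

/-- The triangulation `U⁻`: interior edges `{0,0̄}`, `{0,x}` for `2 ≤ x ≤ d`,
and `{0̄,x̄}` for `2 ≤ x ≤ d`. -/
def UminusSet (d : ℕ) : Set (Finset (ZMod (2 * d + 2))) :=
  boundarySet (2 * d + 2) ∪ symCl (2 * d + 2)
    ({({(0 : ZMod (2 * d + 2)), opp (2 * d + 2) 0} : Finset (ZMod (2 * d + 2)))} ∪
     {e | ∃ x : ℕ, 2 ≤ x ∧ x ≤ d ∧
       e = ({(0 : ZMod (2 * d + 2)), (x : ZMod (2 * d + 2))} : Finset (ZMod (2 * d + 2)))})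

/-- The triangulation `U⁺`: interior edges the diagonal `{x,x̄}`, the edges `{0,v}`
for `v ∈ {2,…,x} ∪ {x̄,…,2d}`, and their centrally symmetric copies. -/
def UplusSet (d x : ℕ) : Set (Finset (ZMod (2 * d + 2))) :=
  boundarySet (2 * d + 2) ∪ symCl (2 * d + 2)
    ({({(x : ZMod (2 * d + 2)), opp (2 * d + 2) (x : ZMod (2 * d + 2))} : Finset (ZMod (2 * d + 2)))} ∪
     {e | ∃ v : ℕ, ((2 ≤ v ∧ v ≤ x) ∨ (x + d + 1 ≤ v ∧ v ≤ 2 * d)) ∧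
       e = ({(0 : ZMod (2 * d + 2)), (v : ZMod (2 * d + 2))} : Finset (ZMod (2 * d + 2)))})

/-!
Two distinct diagonals always cross, which gives uniqueness. For existence, suppose `T` has no
diagonal and let `{a, a + g}` be an edge of `T` whose short side has maximal length `g ≤ d`.
Some edge `f` of `T` crosses the diagonal `{a, ā}`; of `f` and its mirror image `f̄`, the one
whose short side passes through `a` (or through `ā`) has length at most `g`, so one of its
endpoints lies strictly inside the short side of `{a, a + g}` (resp. `{ā, ā + g}`), and the two
edges cross.
-/

theorem _root_.Finset.pair_eq_pair_iff {α : Type*} [DecidableEq α] {x y z w : α} :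
    ({x, y} : Finset α) = {z, w} ↔ x = z ∧ y = w ∨ x = w ∧ y = z := by
  rw [← Finset.coe_inj, Finset.coe_pair, Finset.coe_pair, Set.pair_eq_pair_iff]

section CyclicOrder

variable {n : ℕ}

theorem val_add_natCast_sub_self (x : ZMod n) {k : ℕ} (hk : k < n) :
    (x + k - x).val = k := by
  rw [add_sub_cancel_left, ZMod.val_cast_of_lt hk]

theorem Sbtw.exists_offsets [NeZero n] {p q r s : ZMod n} (hr : Sbtw n p r q) (hs : Sbtw n q s p) :
    ∃ α β γ : ℕ, 0 < α ∧ α < β ∧ β < γ ∧ γ < n ∧ r = p + α ∧ q = p + β ∧ s = p + γ := by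
  obtain ⟨hα, hαβ⟩ := hr
  obtain ⟨hδ, hδβ⟩ := hs
  have hqp : q - p ≠ 0 := fun h => by rw [h, ZMod.val_zero] at hαβ; omega
  have hpq : (p - q).val = n - (q - p).val := by
    rw [← neg_sub, ZMod.neg_val, if_neg hqp]
  refine ⟨(r - p).val, (q - p).val, (q - p).val + (s - q).val, hα, hαβ, by omega, by omega,
    ?_, ?_, ?_⟩ <;> push_cast [ZMod.natCast_zmod_val] <;> ring

theorem crosses_of_lt [NeZero n] (p : ZMod n) {α β γ : ℕ} (hα : 0 < α) (hαβ : α < β) (hβγ : β < γ)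
    (hγ : γ < n) : Crosses n {p, p + β} {p + α, p + γ} := by
  have hγβ : (p + γ - (p + β)).val = γ - β := by
    rw [add_sub_add_left_eq_sub, ← Nat.cast_sub hβγ.le, ZMod.val_cast_of_lt (by omega)]
  have hβ : (p - (p + β)).val = n - β := by
    have hβ0 : (β : ZMod n) ≠ 0 := fun h => by
      simpa [ZMod.val_cast_of_lt (hβγ.trans hγ), (hα.trans hαβ).ne'] using congrArg ZMod.val h
    rw [sub_add_cancel_left, ZMod.neg_val, if_neg hβ0, ZMod.val_cast_of_lt (by omega)]
  refine ⟨p, p + β, p + α, p + γ, rfl, rfl, ?_, ?_⟩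
  · rw [Sbtw, val_add_natCast_sub_self p (by omega), val_add_natCast_sub_self p (by omega)]
    exact ⟨hα, hαβ⟩
  · rw [Sbtw, hγβ, hβ]
    omega

theorem Crosses.exists_offsets [NeZero n] {e f : Finset (ZMod n)} (h : Crosses n e f) :
    ∃ (p : ZMod n) (α β γ : ℕ), 0 < α ∧ α < β ∧ β < γ ∧ γ < n ∧
      e = {p, p + β} ∧ f = {p + α, p + γ} := by
  obtain ⟨p, q, r, s, rfl, rfl, hr, hs⟩ := h
  obtain ⟨α, β, γ, hα, hαβ, hβγ, hγ, rfl, rfl, rfl⟩ := hr.exists_offsets hs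
  exact ⟨p, α, β, γ, hα, hαβ, hβγ, hγ, rfl, rfl⟩

theorem Crosses.symm [NeZero n] {e f : Finset (ZMod n)} (h : Crosses n e f) : Crosses n f e := by
  obtain ⟨p, α, β, γ, hα, hαβ, hβγ, hγ, rfl, rfl⟩ := h.exists_offsets
  have key := crosses_of_lt (p + (α : ZMod n)) (Nat.sub_pos_of_lt hαβ) (Nat.sub_lt_sub_right hαβ.le hβγ)
    (Nat.sub_lt_sub_right (hαβ.trans hβγ).le hγ) (Nat.sub_lt n.pos_of_neZero hα)
  rwa [Nat.cast_sub hαβ.le, Nat.cast_sub (hαβ.trans hβγ).le, Nat.cast_sub (by omega),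
    ZMod.natCast_self, add_add_sub_cancel, add_add_sub_cancel, zero_sub, add_neg_cancel_right,
    Finset.pair_comm _ p] at key

theorem IsTriangulation.exists_crosses_of_notMem [NeZero n] {T : Set (Finset (ZMod n))}
    (hT : IsTriangulation n T) {e : Finset (ZMod n)} (he : IsEdge n e) (heT : e ∉ T) :
    ∃ f ∈ T, Crosses n e f := by
  by_contra! h
  exact heT (hT.2.2 e he fun f hf => ⟨h f hf, fun hfe => h f hf hfe.symm⟩)

end CyclicOrder

theorem opp_add {n : ℕ} (x y : ZMod n) : opp n (x + y) = opp n x + y := add_right_comm x y _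

section Opposite

variable {d : ℕ}

theorem two_mul_add_two_eq_zero (d : ℕ) : (2 * d + 2 : ZMod (2 * d + 2)) = 0 := by
  exact_mod_cast ZMod.natCast_self (2 * d + 2)

theorem opp_eq_add (x : ZMod (2 * d + 2)) : opp (2 * d + 2) x = x + (d + 1) := by
  rw [opp, show (2 * d + 2) / 2 = d + 1 by omega]
  push_cast
  rfl

theorem opp_opp (x : ZMod (2 * d + 2)) : opp (2 * d + 2) (opp (2 * d + 2) x) = x := by
  rw [opp_eq_add, opp_eq_add]
  linear_combination two_mul_add_two_eq_zero d

theorem ne_opp (x : ZMod (2 * d + 2)) : x ≠ opp (2 * d + 2) x := by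
  intro h
  have h0 : ((d + 1 : ℕ) : ZMod (2 * d + 2)) = 0 := by
    push_cast
    linear_combination -(h.trans (opp_eq_add x))
  have h1 := congrArg ZMod.val h0
  rw [ZMod.val_cast_of_lt (by omega), ZMod.val_zero] at h1
  omega

theorem diagonals_cross {x y : ZMod (2 * d + 2)} (hxy : x ≠ y) (hyx : y ≠ opp (2 * d + 2) x) :
    Crosses (2 * d + 2) {x, opp (2 * d + 2) x} {y, opp (2 * d + 2) y} := by
  set s := (y - x).val with hs_def
  have hy : y = x + s := by rw [hs_def, ZMod.natCast_zmod_val, add_sub_cancel]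
  have hs0 : s ≠ 0 := fun h => hxy (by rw [hy, h, Nat.cast_zero, add_zero])
  have hsd : s ≠ d + 1 := fun h => hyx (by rw [hy, h, opp_eq_add]; push_cast; rfl)
  have hsn : s < 2 * d + 2 := ZMod.val_lt _
  rw [opp_eq_add, opp_eq_add, hy]
  rcases lt_or_gt_of_ne hsd with hlt | hgt
  · have key := crosses_of_lt x (γ := s + (d + 1)) (Nat.pos_of_ne_zero hs0) hlt (by omega) (by omega)
    push_cast at key
    convert key using 3
    ring
  · have key := crosses_of_lt x (α := s - (d + 1)) (β := d + 1) (γ := s) (by omega) (by omega) hgt hsn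
    push_cast [Nat.cast_sub hgt.le] at key
    rwa [Finset.pair_comm (x + s), show x + s + (d + 1) = x + (s - (d + 1)) by
      linear_combination two_mul_add_two_eq_zero d]

/-- `s < t` says that the short side of the edge, of length `d + 1 + s - t`, passes through `b`. -/
theorem IsCST.exists_mem_crossing_diagonal {T : Set (Finset (ZMod (2 * d + 2)))}
    (hT : IsCST (2 * d + 2) T) (hno : ∀ x, ({x, opp (2 * d + 2) x} : Finset _) ∉ T)
    (a : ZMod (2 * d + 2)) :
    ∃ b, (b = a ∨ b = opp (2 * d + 2) a) ∧ ∃ s t : ℕ, 0 < s ∧ s < t ∧ t ≤ d ∧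
      ({b + s, b + (d + 1 + t : ℕ)} : Finset _) ∈ T := by
  obtain ⟨f, hfT, hf⟩ := hT.1.exists_crosses_of_notMem ⟨a, _, ne_opp a, rfl⟩ (hno a)
  obtain ⟨p, α, β, γ, hα, hαβ, hβγ, hγ, hpair, rfl⟩ := hf.exists_offsets
  have hp : (p = a ∨ p = opp (2 * d + 2) a) ∧ p + β = opp (2 * d + 2) p := by
    rcases Finset.pair_eq_pair_iff.mp hpair with ⟨rfl, h⟩ | ⟨h, rfl⟩
    · exact ⟨Or.inl rfl, h.symm⟩
    · exact ⟨Or.inr rfl, by rw [opp_opp]; exact h.symm⟩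
  have hβ : β = d + 1 := by
    have h := hp.2
    rw [opp_eq_add, add_right_inj, show (d + 1 : ZMod (2 * d + 2)) = (d + 1 : ℕ) by push_cast; rfl,
      ZMod.natCast_eq_natCast_iff', Nat.mod_eq_of_lt (by omega), Nat.mod_eq_of_lt (by omega)] at h
    exact h
  subst hβ
  obtain ⟨t, rfl⟩ : ∃ t, γ = d + 1 + t := ⟨γ - (d + 1), by omega⟩
  refine ⟨p, hp.1, ?_⟩
  rcases lt_trichotomy α t with hlt | rfl | hgt
  · exact ⟨α, t, hα, hlt, by omega, hfT⟩
  · have h : p + (d + 1 + α : ℕ) = opp (2 * d + 2) (p + α) := by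
      rw [opp_eq_add]; push_cast; ring
    exact absurd (h ▸ hfT) (hno _)
  · have h1 : opp (2 * d + 2) (p + α) = p + (d + 1 + α : ℕ) := by
      rw [opp_eq_add]; push_cast; ring
    have h2 : opp (2 * d + 2) (p + (d + 1 + t : ℕ)) = p + t := by
      rw [opp_eq_add]; push_cast; linear_combination two_mul_add_two_eq_zero d
    have hfT' := hT.2 _ _ hfT
    rw [h1, h2, Finset.pair_comm] at hfT'
    exact ⟨t, α, by omega, hgt, by omega, hfT'⟩

theorem IsCST.exists_diagonal_mem {T : Set (Finset (ZMod (2 * d + 2)))}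
    (hT : IsCST (2 * d + 2) T) : ∃ x, ({x, opp (2 * d + 2) x} : Finset _) ∈ T := by
  classical
  by_contra! hno
  let P (k : ℕ) : Prop := ∃ c : ZMod (2 * d + 2), ({c, c + k} : Finset _) ∈ T
  have hP {b : ZMod (2 * d + 2)} {s t : ℕ} (hst : s < t) (ht : t ≤ d)
      (hf : ({b + s, b + (d + 1 + t : ℕ)} : Finset _) ∈ T) : P (d + 1 + s - t) := by
    refine ⟨b + (d + 1 + t : ℕ), ?_⟩
    rwa [Finset.pair_comm, show b + (d + 1 + t : ℕ) + (d + 1 + s - t : ℕ) = b + s by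
      push_cast [Nat.cast_sub (show t ≤ d + 1 + s by omega)]
      linear_combination two_mul_add_two_eq_zero d]
  obtain ⟨_, -, s₀, t₀, -, hst₀, ht₀, hf₀⟩ := hT.exists_mem_crossing_diagonal hno 0
  obtain ⟨a, ha⟩ := Nat.findGreatest_spec (n := d) (by omega) (hP hst₀ ht₀ hf₀)
  set g := Nat.findGreatest P d
  obtain ⟨b, hb, s, t, hs, hst, ht, hf⟩ := hT.exists_mem_crossing_diagonal hno a
  have hbT : ({b, b + g} : Finset _) ∈ T := by
    rcases hb with rfl | rfl
    · exact ha
    · simpa only [opp_add] using hT.2 _ _ ha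
  have hlen : d + 1 + s - t ≤ g := Nat.le_findGreatest (by omega) (hP hst ht hf)
  have hgd : g ≤ d := Nat.findGreatest_le d
  exact hT.1.2.1 _ hbT _ hf (crosses_of_lt b hs (by omega) (by omega) (by omega))

end Opposite

theorem unique_diagonal_general (d : ℕ)
    (T : Set (Finset (ZMod (2 * d + 2)))) (hT : IsCST (2 * d + 2) T) :
    ∃! e : Finset (ZMod (2 * d + 2)),
      e ∈ T ∧ ∃ x : ZMod (2 * d + 2), e = ({x, opp (2 * d + 2) x} : Finset (ZMod (2 * d + 2))) := by
  obtain ⟨x, hx⟩ := hT.exists_diagonal_mem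
  refine ⟨{x, opp (2 * d + 2) x}, ⟨hx, x, rfl⟩, ?_⟩
  rintro _ ⟨hyT, y, rfl⟩
  by_contra hne
  have hxy : x ≠ y := by rintro rfl; exact hne rfl
  have hyx : y ≠ opp (2 * d + 2) x := by
    rintro rfl
    rw [opp_opp, Finset.pair_comm] at hne
    exact hne rfl
  exact hT.1.2.1 _ hx _ hyT (diagonals_cross hxy hyx)

/-- every centrally symmetric triangulation of a convex polygon with
`2d+2` vertices contains exactly one diagonal, i.e. exactly one edge `{x, x̄}`. -/
theorem unique_diagonal (d : ℕ) (hd : 1 ≤ d)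
    (T : Set (Finset (ZMod (2 * d + 2)))) (hT : IsCST (2 * d + 2) T) :
    ∃! e : Finset (ZMod (2 * d + 2)),
      e ∈ T ∧ ∃ x : ZMod (2 * d + 2), e = ({x, opp (2 * d + 2) x} : Finset (ZMod (2 * d + 2))) :=
  unique_diagonal_general d T hT

end Cyclo
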